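/- arXiv:1006.4864 — 2 statements merged into one kernel-verified Lean document; each statement's English description precedes it below -/
import Mathlib

section
/- Let B, B₁, …, Bₙ : ℝ → ℝ be continuous functions with B(0) = Bⱼ(0) = 0, let θ > 0, and suppose the integrals below converge. Define u₀(t) = B(t), and inductively for k ≥ 1: r_k(t) = log ∫_{-∞}^t exp(u_{k-1}(s,t) − θ(t−s) + B_k(s,t)) ds and u_k(t) = u_{k-1}(t) + r_k(0) − r_k(t), where f(s,t) denotes f(t) − f(s). Define Z_n^θ(t) = ∫_{-∞<s₀<⋯<s_{n-1}<t} exp(−B(s₀) + θs₀ + B₁(s₀,s₁) + ⋯ + Bₙ(s_{n-1},t)) ds₀⋯ds_{n-1}. Then Σ_{k=1}^n r_k(t) = B(t) − θt + log Z_n^θ(t). -/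
open MeasureTheory

/-- `nxt t s k` is `s k` for `k < n` and `t` for `k ≥ n`. -/
noncomputable def nxt (t : ℝ) {n : ℕ} (s : Fin n → ℝ) (k : ℕ) : ℝ :=
  if h : k < n then s ⟨k, h⟩ else t

/-- Partition function of the O'Connell–Yor polymer with boundary:
`Z_n^θ(t) = ∫_{-∞<s₀<⋯<s_{n-1}<t} exp(−B(s₀)+θs₀+B₁(s₀,s₁)+⋯+Bₙ(s_{n-1},t)) ds`. -/
noncomputable def Zbdry (B : ℝ → ℝ) (Bf : ℕ → ℝ → ℝ) (θ : ℝ) (n : ℕ) (t : ℝ) : ℝ :=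
  ∫ s in {s : Fin n → ℝ | StrictMono s ∧ ∀ i, s i < t},
    Real.exp (-B (nxt t s 0) + θ * nxt t s 0 +
      ∑ k ∈ Finset.range n, (Bf (k + 1) (nxt t s (k + 1)) - Bf (k + 1) (nxt t s k)))

/-!
Write `Z_m(t)` for the partition function with `m` lines, so `Z_0(t) = exp(θt − B(t))`.
Integrating out the last time `s_{m-1} = x` first (Tonelli) gives the recursion
`Z_{m+1}(t) = ∫_{-∞}^t exp(B_{m+1}(x,t)) Z_m(x) dx`.
Inductively `u_m(x) = c_m + θx − log Z_m(x)`, so the integrand defining `r_{m+1}(t)` is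
`exp(B_{m+1}(x,t)) Z_m(x) / Z_m(t)`, whence `r_{m+1}(t) = log Z_{m+1}(t) − log Z_m(t)` and the sum
telescopes. Positivity of every `Z_m(t)`, needed for the logarithms, holds because the integrand
is an exponential and the simplex of ordered times is a nonempty open set.
-/

open Set Real

def orderedSimplex (m : ℕ) (t : ℝ) : Set (Fin m → ℝ) := {s | StrictMono s ∧ ∀ i, s i < t}

noncomputable def polymerWeight (B : ℝ → ℝ) (Bf : ℕ → ℝ → ℝ) (θ : ℝ) (m : ℕ) (t : ℝ)
    (s : Fin m → ℝ) : ℝ :=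
  exp (-B (nxt t s 0) + θ * nxt t s 0 +
    ∑ k ∈ Finset.range m, (Bf (k + 1) (nxt t s (k + 1)) - Bf (k + 1) (nxt t s k)))

lemma Zbdry_eq_setIntegral (B : ℝ → ℝ) (Bf : ℕ → ℝ → ℝ) (θ : ℝ) (m : ℕ) (t : ℝ) :
    Zbdry B Bf θ m t = ∫ s in orderedSimplex m t, polymerWeight B Bf θ m t s := rfl

lemma nxt_self {m : ℕ} (t : ℝ) (s : Fin m → ℝ) : nxt t s m = t := by
  simp [nxt]

lemma nxt_snoc_of_le {m k : ℕ} (hk : k ≤ m) (t x : ℝ) (y : Fin m → ℝ) :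
    nxt t (Fin.snoc y x : Fin (m + 1) → ℝ) k = nxt x y k := by
  rcases hk.lt_or_eq with hk | rfl
  · simp [nxt, Fin.snoc, hk, Nat.lt_succ_of_lt hk]
  · simp [nxt, Fin.snoc]

lemma continuous_nxt {m : ℕ} (t : ℝ) (k : ℕ) : Continuous fun s : Fin m → ℝ => nxt t s k := by
  unfold nxt
  split_ifs
  exacts [continuous_apply _, continuous_const]

lemma isOpen_orderedSimplex (m : ℕ) (t : ℝ) : IsOpen (orderedSimplex m t) := by
  have : orderedSimplex m t =
      (⋂ i : Fin m, ⋂ j : Fin m, ⋂ (_ : i < j), {s | s i < s j}) ∩ ⋂ i, {s | s i < t} := by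
    ext s
    simp [orderedSimplex, StrictMono]
  rw [this]
  refine .inter (isOpen_iInter_of_finite fun i => isOpen_iInter_of_finite fun j =>
    isOpen_iInter_of_finite fun _ => isOpen_lt (continuous_apply i) (continuous_apply j))
    (isOpen_iInter_of_finite fun i => isOpen_lt (continuous_apply i) continuous_const)

lemma orderedSimplex_nonempty (m : ℕ) (t : ℝ) : (orderedSimplex m t).Nonempty := by
  refine ⟨fun i => t - m + i, fun i j hij => by simpa using hij, fun i => ?_⟩
  have : (i : ℝ) < m := by exact_mod_cast i.isLt
  linarith

lemma orderedSimplex_zero (t : ℝ) : orderedSimplex 0 t = univ :=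
  eq_univ_of_forall fun s => ⟨Subsingleton.strictMono s, finZeroElim⟩

lemma snoc_mem_orderedSimplex_iff {m : ℕ} {t x : ℝ} {y : Fin m → ℝ} :
    (Fin.snoc y x : Fin (m + 1) → ℝ) ∈ orderedSimplex (m + 1) t ↔
      x < t ∧ y ∈ orderedSimplex m x := by
  rw [← Fin.insertNth_last']
  simp only [orderedSimplex, mem_ofPred_eq, Fin.strictMono_insertNth_iff, Fin.forall_fin_succ']
  simp only [Fin.castSucc_lt_last, forall_const, Fin.last_le_iff, Fin.castSucc_ne_last,
    IsEmpty.forall_iff, implies_true, and_true, Fin.insertNth_last', Fin.snoc_castSucc,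
    Fin.insertNth_apply_same]
  exact ⟨fun ⟨h, _, hx⟩ => ⟨hx, h⟩, fun ⟨hx, hy, hyx⟩ => ⟨⟨hy, hyx⟩, fun i => (hyx i).trans hx, hx⟩⟩

open scoped ENNReal in
lemma lintegral_orderedSimplex_succ {m : ℕ} (t : ℝ) {g : (Fin (m + 1) → ℝ) → ℝ≥0∞}
    (hg : Measurable g) :
    ∫⁻ s in orderedSimplex (m + 1) t, g s =
      ∫⁻ x in Iio t, ∫⁻ y in orderedSimplex m x, g (Fin.snoc y x) := by
  classical
  have hS : ∀ k u, MeasurableSet (orderedSimplex k u) :=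
    fun k u => (isOpen_orderedSimplex k u).measurableSet
  have he : ∀ x y, (MeasurableEquiv.piFinSuccAbove (fun _ : Fin (m + 1) => ℝ) (Fin.last m)).symm
      (x, y) = Fin.snoc y x := fun x y => Fin.insertNth_last' x y
  rw [← lintegral_indicator (hS _ _),
    ← (volume_preserving_piFinSuccAbove _ (Fin.last m)).symm.lintegral_comp (hg.indicator (hS _ _)),
    Measure.volume_eq_prod, lintegral_prod _ (by exact ((hg.indicator (hS _ _)).comp
      (MeasurableEquiv.piFinSuccAbove _ _).symm.measurable).aemeasurable),
    ← lintegral_indicator measurableSet_Iio]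
  refine lintegral_congr fun x => ?_
  simp only [he]
  by_cases hx : x < t
  · rw [indicator_of_mem (mem_Iio.2 hx), ← lintegral_indicator (hS _ _)]
    exact lintegral_congr fun y => by
      simp only [indicator_apply, snoc_mem_orderedSimplex_iff, hx, true_and]
  · simp [snoc_mem_orderedSimplex_iff, hx]

lemma integrable_and_integral_eq_of_lintegral_ofReal_eq {α : Type*} [MeasurableSpace α]
    {μ : Measure α} {f : α → ℝ} {c : ℝ} (hf : AEStronglyMeasurable f μ) (hf0 : ∀ x, 0 ≤ f x)
    (hc : 0 ≤ c) (h : ∫⁻ x, ENNReal.ofReal (f x) ∂μ = ENNReal.ofReal c) :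
    Integrable f μ ∧ ∫ x, f x ∂μ = c := by
  refine ⟨⟨hf, (hasFiniteIntegral_iff_ofReal (ae_of_all _ hf0)).2 (h ▸ ENNReal.ofReal_lt_top)⟩, ?_⟩
  rw [integral_eq_lintegral_of_nonneg_ae (ae_of_all _ hf0) hf, h, ENNReal.toReal_ofReal hc]

section Partition

variable {B : ℝ → ℝ} {Bf : ℕ → ℝ → ℝ} {θ : ℝ}

lemma continuous_polymerWeight (hB : Continuous B) (hBf : ∀ k, Continuous (Bf k)) (m : ℕ)
    (t : ℝ) : Continuous (polymerWeight B Bf θ m t) := by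
  unfold polymerWeight
  have := continuous_nxt (m := m) t
  fun_prop

lemma polymerWeight_zero (t : ℝ) (s : Fin 0 → ℝ) :
    polymerWeight B Bf θ 0 t s = exp (-B t + θ * t) := by
  simp [polymerWeight, nxt]

lemma polymerWeight_snoc (m : ℕ) (t x : ℝ) (y : Fin m → ℝ) :
    polymerWeight B Bf θ (m + 1) t (Fin.snoc y x) =
      exp (Bf (m + 1) t - Bf (m + 1) x) * polymerWeight B Bf θ m x y := by
  unfold polymerWeight
  rw [← exp_add, Finset.sum_range_succ, nxt_self, nxt_snoc_of_le le_rfl, nxt_self,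
    nxt_snoc_of_le m.zero_le, Finset.sum_congr rfl fun k hk => by
      rw [nxt_snoc_of_le (Finset.mem_range.1 hk), nxt_snoc_of_le (Finset.mem_range.1 hk).le]]
  congr 1
  ring

lemma integrableOn_polymerWeight_zero (t : ℝ) :
    IntegrableOn (polymerWeight B Bf θ 0 t) (orderedSimplex 0 t) := by
  rw [funext (polymerWeight_zero t), orderedSimplex_zero]
  exact integrableOn_const

lemma Zbdry_zero (t : ℝ) : Zbdry B Bf θ 0 t = exp (-B t + θ * t) := by
  simp [Zbdry_eq_setIntegral, orderedSimplex_zero, polymerWeight_zero, measureReal_def, volume_pi]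

lemma Zbdry_nonneg (m : ℕ) (t : ℝ) : 0 ≤ Zbdry B Bf θ m t :=
  integral_nonneg fun _ => (exp_pos _).le

lemma Zbdry_pos {m : ℕ} {t : ℝ}
    (h : IntegrableOn (polymerWeight B Bf θ m t) (orderedSimplex m t)) :
    0 < Zbdry B Bf θ m t := by
  have : NeZero (volume.restrict (orderedSimplex m t)) := ⟨by
    rw [Ne, Measure.restrict_eq_zero]
    exact (isOpen_orderedSimplex m t).measure_ne_zero volume (orderedSimplex_nonempty m t)⟩
  rw [Zbdry_eq_setIntegral]
  exact integral_exp_pos h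

lemma integrableOn_polymerWeight_succ_and_Zbdry_succ (hB : Continuous B)
    (hBf : ∀ k, Continuous (Bf k)) {m : ℕ} {t : ℝ}
    (hm : ∀ x, IntegrableOn (polymerWeight B Bf θ m x) (orderedSimplex m x))
    (hJ : IntegrableOn (fun x => exp (Bf (m + 1) t - Bf (m + 1) x) * Zbdry B Bf θ m x) (Iio t)) :
    IntegrableOn (polymerWeight B Bf θ (m + 1) t) (orderedSimplex (m + 1) t) ∧
      Zbdry B Bf θ (m + 1) t =
        ∫ x in Iio t, exp (Bf (m + 1) t - Bf (m + 1) x) * Zbdry B Bf θ m x := by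
  have hJ0 : ∀ x, 0 ≤ exp (Bf (m + 1) t - Bf (m + 1) x) * Zbdry B Bf θ m x :=
    fun x => mul_nonneg (exp_pos _).le (Zbdry_nonneg m x)
  refine integrable_and_integral_eq_of_lintegral_ofReal_eq
    (continuous_polymerWeight hB hBf _ _).aestronglyMeasurable (fun _ => (exp_pos _).le)
    (integral_nonneg hJ0) ?_
  rw [lintegral_orderedSimplex_succ t (g := fun s => ENNReal.ofReal (polymerWeight B Bf θ _ t s))
      (ENNReal.measurable_ofReal.comp (continuous_polymerWeight hB hBf _ _).measurable),
    ofReal_integral_eq_lintegral_ofReal hJ (ae_of_all _ hJ0)]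
  refine lintegral_congr fun x => ?_
  simp only [polymerWeight_snoc]
  rw [← ofReal_integral_eq_lintegral_ofReal ((hm x).const_mul _)
    (ae_of_all _ fun _ => mul_nonneg (exp_pos _).le (exp_pos _).le), integral_const_mul,
    Zbdry_eq_setIntegral]

lemma eq_add_sum_Icc_of_forall_eq_add_sub {u r : ℕ → ℝ → ℝ}
    (hu : ∀ k, 1 ≤ k → ∀ t : ℝ, u k t = u (k - 1) t + r k 0 - r k t) (m : ℕ) (t : ℝ) :
    u m t = u 0 t + ∑ k ∈ Finset.Icc 1 m, (r k 0 - r k t) := by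
  induction m with
  | zero => simp
  | succ m ih =>
    rw [hu (m + 1) m.succ_pos t, Nat.add_sub_cancel, ih, Finset.sum_Icc_succ_top m.succ_pos]
    ring

lemma exp_increment_eq_mul_div {u Z b : ℝ → ℝ} {c θ : ℝ}
    (hu : ∀ x, u x = c + θ * x - log (Z x)) (hZ : ∀ x, 0 < Z x) (t x : ℝ) :
    exp ((u t - u x) - θ * (t - x) + (b t - b x)) = exp (b t - b x) * Z x / Z t := by
  rw [hu t, hu x, show c + θ * t - log (Z t) - (c + θ * x - log (Z x)) - θ * (t - x) + (b t - b x)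
      = b t - b x + log (Z x) - log (Z t) by ring,
    exp_sub, exp_add, exp_log (hZ x), exp_log (hZ t)]

lemma integrableOn_polymerWeight_and_sum_r_eq_succ (hB : Continuous B)
    (hBf : ∀ k, Continuous (Bf k)) {u r : ℕ → ℝ → ℝ}
    (hu0 : u 0 = B)
    (hrint : ∀ k, 1 ≤ k → ∀ t : ℝ,
      IntegrableOn (fun s => exp ((u (k - 1) t - u (k - 1) s) - θ * (t - s)
        + (Bf k t - Bf k s))) (Iio t))
    (hr : ∀ k, 1 ≤ k → ∀ t : ℝ,
      r k t = log (∫ s in Iio t,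
        exp ((u (k - 1) t - u (k - 1) s) - θ * (t - s) + (Bf k t - Bf k s))))
    (hu : ∀ k, 1 ≤ k → ∀ t : ℝ, u k t = u (k - 1) t + r k 0 - r k t) {m : ℕ}
    (ih : ∀ x, IntegrableOn (polymerWeight B Bf θ m x) (orderedSimplex m x) ∧
      ∑ k ∈ Finset.Icc 1 m, r k x = B x - θ * x + log (Zbdry B Bf θ m x)) (t : ℝ) :
    IntegrableOn (polymerWeight B Bf θ (m + 1) t) (orderedSimplex (m + 1) t) ∧
      ∑ k ∈ Finset.Icc 1 (m + 1), r k t = B t - θ * t + log (Zbdry B Bf θ (m + 1) t) := by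
  have hZ : ∀ x, 0 < Zbdry B Bf θ m x := fun x => Zbdry_pos (ih x).1
  have hum : ∀ x, u m x = ∑ k ∈ Finset.Icc 1 m, r k 0 + θ * x - log (Zbdry B Bf θ m x) := by
    intro x
    rw [eq_add_sum_Icc_of_forall_eq_add_sub hu, hu0, Finset.sum_sub_distrib, (ih x).2]
    ring
  have hintegrand := exp_increment_eq_mul_div (b := Bf (m + 1)) hum hZ t
  have hJ : IntegrableOn (fun x => exp (Bf (m + 1) t - Bf (m + 1) x) * Zbdry B Bf θ m x)
      (Iio t) :=
    IntegrableOn.congr_fun ((hrint (m + 1) m.succ_pos t).mul_const (Zbdry B Bf θ m t))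
      (fun x _ => by rw [Nat.add_sub_cancel, hintegrand x, div_mul_cancel₀ _ (hZ t).ne'])
      measurableSet_Iio
  obtain ⟨hint, hZsucc⟩ := integrableOn_polymerWeight_succ_and_Zbdry_succ hB hBf (ih · |>.1) hJ
  have hr_succ : r (m + 1) t = log (Zbdry B Bf θ (m + 1) t) - log (Zbdry B Bf θ m t) := by
    rw [hr (m + 1) m.succ_pos t, Nat.add_sub_cancel,
      setIntegral_congr_fun measurableSet_Iio fun x _ => hintegrand x, integral_div, ← hZsucc,
      log_div (Zbdry_pos hint).ne' (hZ t).ne']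
  refine ⟨hint, ?_⟩
  rw [Finset.sum_Icc_succ_top m.succ_pos, (ih t).2, hr_succ]
  ring

end Partition

theorem sum_r_eq_log_partition_general
    (B : ℝ → ℝ) (Bf : ℕ → ℝ → ℝ) (hB : Continuous B) (hBf : ∀ k, Continuous (Bf k))
    (θ : ℝ) (n : ℕ)
    (u r : ℕ → ℝ → ℝ)
    (hu0 : u 0 = B)
    (hrint : ∀ k, 1 ≤ k → ∀ t : ℝ,
      IntegrableOn (fun s => Real.exp ((u (k - 1) t - u (k - 1) s) - θ * (t - s)
        + (Bf k t - Bf k s))) (Set.Iio t))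
    (hr : ∀ k, 1 ≤ k → ∀ t : ℝ,
      r k t = Real.log (∫ s in Set.Iio t,
        Real.exp ((u (k - 1) t - u (k - 1) s) - θ * (t - s) + (Bf k t - Bf k s))))
    (hu : ∀ k, 1 ≤ k → ∀ t : ℝ, u k t = u (k - 1) t + r k 0 - r k t)
    (t : ℝ) :
    ∑ k ∈ Finset.Icc 1 n, r k t = B t - θ * t + Real.log (Zbdry B Bf θ n t) := by
  have key : ∀ m x, IntegrableOn (polymerWeight B Bf θ m x) (orderedSimplex m x) ∧
      ∑ k ∈ Finset.Icc 1 m, r k x = B x - θ * x + log (Zbdry B Bf θ m x) := by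
    intro m
    induction m with
    | zero => exact fun x => ⟨integrableOn_polymerWeight_zero x, by simp [Zbdry_zero]⟩
    | succ m ih =>
      exact integrableOn_polymerWeight_and_sum_r_eq_succ hB hBf hu0 hrint hr hu ih
  exact (key n t).2

/-- With `u₀ = B`, `r_k(t) = log ∫_{-∞}^t exp(u_{k-1}(s,t) − θ(t−s) + B_k(s,t)) ds` and
`u_k = u_{k-1} + r_k(0) − r_k`, one has `Σ_{k=1}^n r_k(t) = B(t) − θt + log Z_n^θ(t)`. -/
theorem sum_r_eq_log_partition
    (B : ℝ → ℝ) (Bf : ℕ → ℝ → ℝ) (hB : Continuous B) (hBf : ∀ k, Continuous (Bf k))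
    (hB0 : B 0 = 0) (hBf0 : ∀ k, Bf k 0 = 0)
    (θ : ℝ) (hθ : 0 < θ) (n : ℕ) (hn : 1 ≤ n)
    (u r : ℕ → ℝ → ℝ)
    (hu0 : u 0 = B)
    (hrint : ∀ k, 1 ≤ k → ∀ t : ℝ,
      IntegrableOn (fun s => Real.exp ((u (k - 1) t - u (k - 1) s) - θ * (t - s)
        + (Bf k t - Bf k s))) (Set.Iio t))
    (hr : ∀ k, 1 ≤ k → ∀ t : ℝ,
      r k t = Real.log (∫ s in Set.Iio t,
        Real.exp ((u (k - 1) t - u (k - 1) s) - θ * (t - s) + (Bf k t - Bf k s))))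
    (hu : ∀ k, 1 ≤ k → ∀ t : ℝ, u k t = u (k - 1) t + r k 0 - r k t)
    (hZint : ∀ t : ℝ,
      IntegrableOn (fun s : Fin n → ℝ => Real.exp (-B (nxt t s 0) + θ * nxt t s 0 +
          ∑ k ∈ Finset.range n, (Bf (k + 1) (nxt t s (k + 1)) - Bf (k + 1) (nxt t s k))))
        {s : Fin n → ℝ | StrictMono s ∧ ∀ i, s i < t})
    (t : ℝ) :
    ∑ k ∈ Finset.Icc 1 n, r k t = B t - θ * t + Real.log (Zbdry B Bf θ n t) :=
  sum_r_eq_log_partition_general B Bf hB hBf θ n u r hu0 hrint hr hu t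
end

section
/- Exponential tilting increases the positive part: let μ be a probability measure on ℝ such that x ↦ e^{θx} is μ-integrable for θ in an open interval I, and define the tilted measures dμ_θ = e^{θx} dμ / Z(θ) with Z(θ) = ∫ e^{θx} dμ(x). Then θ ↦ E_{μ_θ}[x^+] is nondecreasing on I and θ ↦ E_{μ_θ}[x^-] is nonincreasing on I (assuming the relevant first moments are finite). -/
/-!
Write `Z(θ) = ∫ e^{θx} dμ` and `G(θ) = ∫ g(x) e^{θx} dμ` for a monotone `g`. For `a ≤ b`,
integrating `(g x - g y) (e^{bx + ay} - e^{ax + by})` over `μ ⊗ μ` gives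
`2 (G(b) Z(a) - G(a) Z(b))`. The integrand is pointwise nonnegative, since
`(bx + ay) - (ax + by) = (b - a)(x - y)` has the sign of `x - y`, as does `g x - g y`.
Hence `G(a) / Z(a) ≤ G(b) / Z(b)`; apply this to `g = x⁺` and to `g = -x⁻`.
-/

open MeasureTheory Real

theorem integral_mul_mul_integral_le_of_cross_nonneg {α : Type*} [MeasurableSpace α]
    {μ : Measure α} [SigmaFinite μ] {g f h : α → ℝ}
    (hf : Integrable f μ) (hh : Integrable h μ)
    (hgf : Integrable (fun x => g x * f x) μ) (hgh : Integrable (fun x => g x * h x) μ)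
    (hcross : ∀ x y, 0 ≤ (g x - g y) * (h x * f y - f x * h y)) :
    (∫ x, g x * f x ∂μ) * (∫ x, h x ∂μ) ≤ (∫ x, g x * h x ∂μ) * (∫ x, f x ∂μ) := by
  have hgh_f := hgh.mul_prod hf
  have hgf_h := hgf.mul_prod hh
  have hh_gf := hh.mul_prod hgf
  have hf_gh := hf.mul_prod hgh
  have hexpand : (fun p : α × α => (g p.1 - g p.2) * (h p.1 * f p.2 - f p.1 * h p.2)) =
      fun p => g p.1 * h p.1 * f p.2 - g p.1 * f p.1 * h p.2
        - h p.1 * (g p.2 * f p.2) + f p.1 * (g p.2 * h p.2) := by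
    ext p; ring
  have hsymm : ∫ p, (g p.1 - g p.2) * (h p.1 * f p.2 - f p.1 * h p.2) ∂μ.prod μ =
      2 * ((∫ x, g x * h x ∂μ) * (∫ x, f x ∂μ) - (∫ x, g x * f x ∂μ) * (∫ x, h x ∂μ)) := by
    rw [hexpand, integral_add ?_ hf_gh, integral_sub ?_ hh_gf, integral_sub hgh_f hgf_h,
      integral_prod_mul (fun x => g x * h x) f, integral_prod_mul (fun x => g x * f x) h,
      integral_prod_mul h (fun x => g x * f x), integral_prod_mul f (fun x => g x * h x)]
    · ring
    · exact hgh_f.sub hgf_h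
    · exact (hgh_f.sub hgf_h).sub hh_gf
  have hnonneg : 0 ≤ ∫ p, (g p.1 - g p.2) * (h p.1 * f p.2 - f p.1 * h p.2) ∂μ.prod μ :=
    integral_nonneg fun p => hcross p.1 p.2
  linarith

theorem sub_mul_exp_cross_nonneg {g : ℝ → ℝ} (hg : Monotone g) {a b : ℝ} (hab : a ≤ b)
    (x y : ℝ) :
    0 ≤ (g x - g y) * (exp (b * x) * exp (a * y) - exp (a * x) * exp (b * y)) := by
  simp only [← exp_add]
  rcases le_total x y with hxy | hxy
  · have hexp : b * x + a * y ≤ a * x + b * y := by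
      nlinarith [mul_le_mul_of_nonneg_left hxy (sub_nonneg.mpr hab)]
    exact mul_nonneg_of_nonpos_of_nonpos (sub_nonpos.mpr (hg hxy))
      (sub_nonpos.mpr (exp_le_exp.mpr hexp))
  · have hexp : a * x + b * y ≤ b * x + a * y := by
      nlinarith [mul_le_mul_of_nonneg_left hxy (sub_nonneg.mpr hab)]
    exact mul_nonneg (sub_nonneg.mpr (hg hxy)) (sub_nonneg.mpr (exp_le_exp.mpr hexp))

section TiltedMean

variable {μ : Measure ℝ} [SigmaFinite μ] [NeZero μ] {g : ℝ → ℝ} {S : Set ℝ}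

theorem monotoneOn_integral_mul_exp_div_integral_exp (hg : Monotone g)
    (hexp : ∀ θ ∈ S, Integrable (fun x => exp (θ * x)) μ)
    (hgexp : ∀ θ ∈ S, Integrable (fun x => g x * exp (θ * x)) μ) :
    MonotoneOn (fun θ => (∫ x, g x * exp (θ * x) ∂μ) / (∫ x, exp (θ * x) ∂μ)) S :=
  fun a ha b hb hab =>
    (div_le_div_iff₀ (integral_exp_pos (hexp a ha)) (integral_exp_pos (hexp b hb))).mpr <|
      integral_mul_mul_integral_le_of_cross_nonneg (hexp a ha) (hexp b hb) (hgexp a ha)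
        (hgexp b hb) (sub_mul_exp_cross_nonneg hg hab)

theorem antitoneOn_integral_mul_exp_div_integral_exp (hg : Antitone g)
    (hexp : ∀ θ ∈ S, Integrable (fun x => exp (θ * x)) μ)
    (hgexp : ∀ θ ∈ S, Integrable (fun x => g x * exp (θ * x)) μ) :
    AntitoneOn (fun θ => (∫ x, g x * exp (θ * x) ∂μ) / (∫ x, exp (θ * x) ∂μ)) S := by
  have hneg := monotoneOn_integral_mul_exp_div_integral_exp (g := fun x => -g x) hg.neg hexp
    fun θ hθ => by simpa only [neg_mul] using (hgexp θ hθ).fun_neg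
  intro a ha b hb hab
  simpa only [neg_mul, integral_neg, neg_div, neg_le_neg_iff] using hneg ha hb hab

end TiltedMean

theorem tilted_posPart_monotone_general
    (μ : Measure ℝ) [IsProbabilityMeasure μ] (I : Set ℝ)
    (hexp : ∀ θ ∈ I, Integrable (fun x => Real.exp (θ * x)) μ)
    (hpos : ∀ θ ∈ I, Integrable (fun x => max x 0 * Real.exp (θ * x)) μ)
    (hneg : ∀ θ ∈ I, Integrable (fun x => max (-x) 0 * Real.exp (θ * x)) μ) :
    MonotoneOn (fun θ =>
        (∫ x, max x 0 * Real.exp (θ * x) ∂μ) / (∫ x, Real.exp (θ * x) ∂μ)) I ∧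
    AntitoneOn (fun θ =>
        (∫ x, max (-x) 0 * Real.exp (θ * x) ∂μ) / (∫ x, Real.exp (θ * x) ∂μ)) I :=
  ⟨monotoneOn_integral_mul_exp_div_integral_exp (fun _ _ h => max_le_max_right 0 h) hexp hpos,
    antitoneOn_integral_mul_exp_div_integral_exp
      (fun _ _ h => max_le_max_right 0 (neg_le_neg h)) hexp hneg⟩

/-- Exponential tilting increases the positive part: for a probability measure `μ` on `ℝ`
with exponential moments on an open interval `I`, the tilted mean of `x⁺` is nondecreasing
in the tilt parameter and the tilted mean of `x⁻` is nonincreasing. -/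
theorem tilted_posPart_monotone
    (μ : Measure ℝ) [IsProbabilityMeasure μ] (I : Set ℝ) (hI : IsOpen I)
    (hexp : ∀ θ ∈ I, Integrable (fun x => Real.exp (θ * x)) μ)
    (hpos : ∀ θ ∈ I, Integrable (fun x => max x 0 * Real.exp (θ * x)) μ)
    (hneg : ∀ θ ∈ I, Integrable (fun x => max (-x) 0 * Real.exp (θ * x)) μ) :
    MonotoneOn (fun θ =>
        (∫ x, max x 0 * Real.exp (θ * x) ∂μ) / (∫ x, Real.exp (θ * x) ∂μ)) I ∧
    AntitoneOn (fun θ =>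
        (∫ x, max (-x) 0 * Real.exp (θ * x) ∂μ) / (∫ x, Real.exp (θ * x) ∂μ)) I :=
  tilted_posPart_monotone_general μ I hexp hpos hneg
end
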